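/- For every positive integer a, every natural number n, and every real x with cos x ≠ 0, the n-th derivative of the function x ↦ (cos x)^{−a} at x equals Q_n^{(a)}(tan x)·(cos x)^{−a}, i.e. iteratedDeriv n (fun x => (cos x)^(−a : ℤ)) x = Q_n^{(a)}(tan x)·(cos x)^{−a}. -/

import Mathlib

open Polynomial

/-- The derivative polynomials `Q_n^{(a)}`:
`Q_0^{(a)} = 1`, `Q_{n+1}^{(a)} = (1+t²)·(Q_n^{(a)})' + a·t·Q_n^{(a)}`. -/
noncomputable def polyQ (a : ℝ) : ℕ → Polynomial ℝ
  | 0 => 1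
  | n + 1 => (1 + X ^ 2) * derivative (polyQ a n) + C a * X * polyQ a n

/-! Since `tan' = 1 + tan²` and `(cos⁻ᵃ)' = a · tan · cos⁻ᵃ`, differentiating
`Q_n^{(a)}(tan x) · cos⁻ᵃ x` gives exactly the recurrence defining `Q_{n+1}^{(a)}`. -/

namespace Real

theorem hasDerivAt_eval_tan (p : ℝ[X]) {x : ℝ} (hx : cos x ≠ 0) :
    HasDerivAt (fun y => p.eval (tan y)) ((1 + tan x ^ 2) * p.derivative.eval (tan x)) x := by
  have hp := (p.hasDerivAt (tan x)).comp x (hasDerivAt_tan hx)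
  rwa [← inv_one_add_tan_sq hx, one_div, inv_inv, mul_comm] at hp

theorem hasDerivAt_cos_zpow_neg (a : ℤ) {x : ℝ} (hx : cos x ≠ 0) :
    HasDerivAt (fun y => cos y ^ (-a)) (a * tan x * cos x ^ (-a)) x := by
  refine ((hasDerivAt_zpow (-a) (cos x) (Or.inl hx)).comp x (hasDerivAt_cos x)).congr_deriv ?_
  rw [tan_eq_sin_div_cos, zpow_sub_one₀ hx]
  push_cast
  field_simp

theorem hasDerivAt_eval_tan_mul_cos_zpow_neg (a : ℤ) (n : ℕ) {x : ℝ} (hx : cos x ≠ 0) :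
    HasDerivAt (fun y => (polyQ a n).eval (tan y) * cos y ^ (-a))
      ((polyQ a (n + 1)).eval (tan x) * cos x ^ (-a)) x := by
  refine ((hasDerivAt_eval_tan (polyQ a n) hx).mul (hasDerivAt_cos_zpow_neg a hx)).congr_deriv ?_
  simp only [polyQ, eval_add, eval_mul, eval_pow, eval_one, eval_C, eval_X]
  ring

theorem iteratedDeriv_cos_zpow_neg (a : ℤ) (n : ℕ) {x : ℝ} (hx : cos x ≠ 0) :
    iteratedDeriv n (fun y => cos y ^ (-a)) x = (polyQ a n).eval (tan x) * cos x ^ (-a) := by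
  induction n generalizing x with
  | zero => simp [polyQ]
  | succ n ih =>
    have hcos : ∀ᶠ y in nhds x, cos y ≠ 0 := continuous_cos.continuousAt.eventually_ne hx
    have hQ : iteratedDeriv n (fun y => cos y ^ (-a))
        =ᶠ[nhds x] fun y => (polyQ a n).eval (tan y) * cos y ^ (-a) :=
      hcos.mono fun y hy => ih hy
    rw [iteratedDeriv_succ, hQ.deriv_eq]
    exact (hasDerivAt_eval_tan_mul_cos_zpow_neg a n hx).deriv

end Real

theorem stmt1_general (a : ℕ) (n : ℕ) (x : ℝ) (hx : Real.cos x ≠ 0) :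
    iteratedDeriv n (fun y => Real.cos y ^ (-(a : ℤ))) x
      = (polyQ (a : ℝ) n).eval (Real.tan x) * Real.cos x ^ (-(a : ℤ)) := by
  exact_mod_cast Real.iteratedDeriv_cos_zpow_neg a n hx

theorem stmt1 (a : ℕ) (ha : 0 < a) (n : ℕ) (x : ℝ) (hx : Real.cos x ≠ 0) :
    iteratedDeriv n (fun y => Real.cos y ^ (-(a : ℤ))) x
      = (polyQ (a : ℝ) n).eval (Real.tan x) * Real.cos x ^ (-(a : ℤ)) :=
  stmt1_general a n x hx
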